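/- If X is a compact metrizable space and ≿ is a continuous, gapless, antisymmetric preference on X, then every maximal domain of ≿ is arc-connected (in fact homeomorphic to a point or to [0,1]). -/

import Mathlib

/-! Restricted to a maximal domain `D`, the preference is a linear order. Maximality makes `D`
closed (by continuity, a limit of points of `D` is comparable with every point of `D`), hence
compact; with gaplessness it makes `D` densely ordered. Compactness forces the subspace topology
of `D` to be its order topology. A compact, separable, densely ordered linear order with two
points is order-isomorphic to `[0,1]`: Cantor's back-and-forth theorem matches a countable dense
subset with the rationals of `(0,1)`, and suprema extend this matching. Two distinct points of
`D` are then joined by the image of a segment of `[0,1]`. -/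

variable {X : Type*}

/-- A set on which the preference is complete. -/
def IsPrefDomain (r : X → X → Prop) (A : Set X) : Prop :=
  ∀ x ∈ A, ∀ y ∈ A, r x y ∨ r y x

/-- A maximal domain of comparability. -/
def IsMaxPrefDomain (r : X → X → Prop) (A : Set X) : Prop :=
  IsPrefDomain r A ∧ ∀ B : Set X, IsPrefDomain r B → A ⊆ B → B = A

/-- Strict preference. -/
def StrictPref (r : X → X → Prop) (x y : X) : Prop :=
  r x y ∧ ¬ r y x

/-- Gapless preference. -/
def Gapless (r : X → X → Prop) : Prop :=
  ∀ x y, StrictPref r x y → ∃ z, StrictPref r x z ∧ StrictPref r z y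

/-- Continuity: upper and lower sets are closed. -/
def ContinuousPref [TopologicalSpace X] (r : X → X → Prop) : Prop :=
  ∀ x : X, IsClosed {y | r y x} ∧ IsClosed {y | r x y}

open Set TopologicalSpace

theorem TopologicalSpace.eq_of_le_of_compactSpace_of_t2Space {α : Type*}
    {t t' : TopologicalSpace α} [@CompactSpace α t] [@T2Space α t'] (h : t ≤ t') : t = t' :=
  le_antisymm h <| (@continuous_id_iff_le α t' t).1 <|
    @Continuous.continuous_symm_of_equiv_compact_to_t2 α α t t' _ _ (Equiv.refl α)
      ((@continuous_id_iff_le α t t').2 h)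

theorem OrderTopology.of_compactSpace {α : Type*} [t : TopologicalSpace α] [LinearOrder α]
    [CompactSpace α] (hIoi : ∀ a : α, IsOpen (Ioi a)) (hIio : ∀ a : α, IsOpen (Iio a)) :
    OrderTopology α := by
  have hT2 : @T2Space α (Preorder.topology α) := by
    let := Preorder.topology α
    have : OrderTopology α := ⟨rfl⟩
    infer_instance
  refine ⟨eq_of_le_of_compactSpace_of_t2Space (le_generateFrom ?_)⟩
  rintro _ ⟨a, rfl | rfl⟩
  exacts [hIoi a, hIio a]

theorem exists_strictMono_ratIoo_exists_between (α : Type*) [LinearOrder α] [TopologicalSpace α]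
    [OrderTopology α] [DenselyOrdered α] [SeparableSpace α] [Nontrivial α] :
    ∃ v : Ioo (0 : ℚ) 1 → α, StrictMono v ∧ ∀ a b, a < b → ∃ q, v q ∈ Ioo a b := by
  obtain ⟨s, hsc, hsd, hbot, htop⟩ := exists_countable_dense_no_bot_top α
  have hbetween : ∀ a b : α, a < b → ∃ c ∈ s, c ∈ Ioo a b := fun a b h => hsd.exists_between h
  have : Countable s := hsc.to_subtype
  have : Nonempty s := hsd.nonempty.to_subtype
  have : DenselyOrdered s :=
    ⟨fun a b h => let ⟨c, hc, hac, hcb⟩ := hbetween a b h; ⟨⟨c, hc⟩, hac, hcb⟩⟩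
  have : NoMinOrder s := ⟨fun a => by
    obtain ⟨b, hba⟩ : ∃ b, b < (a : α) := by simpa [IsBot] using fun h => hbot a h a.2
    obtain ⟨c, hc, -, hca⟩ := hbetween b a hba
    exact ⟨⟨c, hc⟩, hca⟩⟩
  have : NoMaxOrder s := ⟨fun a => by
    obtain ⟨b, hab⟩ : ∃ b, (a : α) < b := by simpa [IsTop] using fun h => htop a h a.2
    obtain ⟨c, hc, hac, -⟩ := hbetween a b hab
    exact ⟨⟨c, hc⟩, hac⟩⟩
  have : Nonempty (Ioo (0 : ℚ) 1) := nonempty_Ioo_subtype zero_lt_one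
  obtain ⟨u⟩ := Order.iso_of_countable_dense (Ioo (0 : ℚ) 1) s
  refine ⟨fun q => u q, fun a b h => u.strictMono h, fun a b h => ?_⟩
  obtain ⟨c, hc, hac⟩ := hbetween a b h
  exact ⟨u.symm ⟨c, hc⟩, by simpa using hac⟩

theorem nonempty_orderIso_of_exists_between {ι α β : Type*} [LinearOrder ι]
    [LinearOrder α] [TopologicalSpace α] [OrderTopology α] [CompactSpace α]
    [CompleteLinearOrder β] [Nontrivial β] [TopologicalSpace β] [OrderTopology β]
    {v : ι → α} {w : ι → β} (hv : StrictMono v) (hw : StrictMono w)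
    (hvd : ∀ a b, a < b → ∃ i, v i ∈ Ioo a b) (hwd : ∀ a b, a < b → ∃ i, w i ∈ Ioo a b) :
    Nonempty (α ≃o β) := by
  have : DenselyOrdered β := ⟨fun a b hab => let ⟨i, hi⟩ := hwd a b hab; ⟨w i, hi⟩⟩
  let g : α → β := fun a => ⨆ (i) (_ : v i ≤ a), w i
  have hgv : ∀ i, g (v i) = w i := fun i =>
    le_antisymm (iSup₂_le fun j hj => hw.monotone (hv.le_iff_le.mp hj))
      (le_iSup₂_of_le i le_rfl le_rfl)
  have hg : StrictMono g := by
    intro a b hab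
    obtain ⟨i, hai, hib⟩ := hvd a b hab
    obtain ⟨j, hij, hjb⟩ := hvd _ _ hib
    calc g a ≤ w i := iSup₂_le fun k hk => hw.monotone (hv.le_iff_le.mp (hk.trans hai.le))
      _ < w j := hw (hv.lt_iff_lt.mp hij)
      _ = g (v j) := (hgv j).symm
      _ ≤ g b := iSup₂_mono' fun k hk => ⟨k, hk.trans hjb.le, le_rfl⟩
  have hdense : DenseRange g :=
    (dense_of_exists_between fun a b hab =>
      (hwd a b hab).elim fun i hi => ⟨w i, mem_range_self i, hi⟩).mono
      (range_subset_iff.2 fun i => ⟨v i, hgv i⟩)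
  have hclosed : IsClosed (range g) :=
    (isCompact_range (hg.monotone.continuous_of_denseRange hdense)).isClosed
  exact ⟨hg.orderIsoOfSurjective g (range_eq_univ.1 (hclosed.closure_eq ▸ hdense.closure_range))⟩

theorem nonempty_orderIso_unitInterval (α : Type*) [LinearOrder α] [TopologicalSpace α]
    [OrderTopology α] [CompactSpace α] [DenselyOrdered α] [SeparableSpace α] [Nontrivial α] :
    Nonempty (α ≃o unitInterval) := by
  obtain ⟨v, hv, hvd⟩ := exists_strictMono_ratIoo_exists_between α
  obtain ⟨w, hw, hwd⟩ := exists_strictMono_ratIoo_exists_between unitInterval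
  exact nonempty_orderIso_of_exists_between hv hw hvd hwd

theorem Set.Icc.convexComb_injective {a b : ℝ} {x y : Icc a b} (hxy : x ≠ y) :
    Function.Injective (Icc.convexComb x y) := fun u v huv => by
  have hyx : (y : ℝ) - x ≠ 0 := sub_ne_zero.2 fun h => hxy (Subtype.ext h.symm)
  have hcoe := congrArg Subtype.val huv
  simp only [Icc.coe_convexComb] at hcoe
  exact Subtype.ext (mul_right_cancel₀ hyx (by linear_combination hcoe))

section Preference

variable {r : X → X → Prop} {D : Set X}

noncomputable abbrev IsPrefDomain.linearOrder (hrefl : Reflexive r) (htrans : Transitive r)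
    (hanti : AntiSymmetric r) (hD : IsPrefDomain r D) : LinearOrder D where
  le a b := r a b
  le_refl a := hrefl a
  le_trans _ _ _ hab hbc := htrans hab hbc
  le_antisymm _ _ hab hba := Subtype.ext (hanti hab hba)
  le_total a b := hD a a.2 b b.2
  toDecidableLE := Classical.decRel _

theorem IsMaxPrefDomain.mem_of_forall_comparable (hrefl : Reflexive r) (hD : IsMaxPrefDomain r D)
    {z : X} (hz : ∀ d ∈ D, r z d ∨ r d z) : z ∈ D := by
  have hdom : IsPrefDomain r (insert z D) := by
    rintro a (rfl | ha) b (rfl | hb)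
    · exact Or.inl (hrefl _)
    · exact hz b hb
    · exact (hz a ha).symm
    · exact hD.1 a ha b hb
  exact hD.2 _ hdom (subset_insert _ _) ▸ mem_insert z D

theorem IsMaxPrefDomain.isClosed [TopologicalSpace X] (hrefl : Reflexive r)
    (hcont : ContinuousPref r) (hD : IsMaxPrefDomain r D) : IsClosed D := by
  refine closure_subset_iff_isClosed.1 fun z hz => hD.mem_of_forall_comparable hrefl fun d hd => ?_
  by_contra! h
  obtain ⟨e, he, heD⟩ := mem_closure_iff.1 hz _
    ((hcont d).1.isOpen_compl.inter (hcont d).2.isOpen_compl) h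
  exact (hD.1 e heD d hd).elim he.1 he.2

theorem IsMaxPrefDomain.exists_between (hrefl : Reflexive r) (htrans : Transitive r)
    (hgap : Gapless r) (hD : IsMaxPrefDomain r D) {a b : X} (ha : a ∈ D) (hb : b ∈ D)
    (hab : StrictPref r a b) : ∃ c ∈ D, StrictPref r a c ∧ StrictPref r c b := by
  by_contra! h
  obtain ⟨z, haz, hzb⟩ := hgap a b hab
  refine h z (hD.mem_of_forall_comparable hrefl fun d hd => ?_) haz hzb
  by_cases hda : r d a
  · exact Or.inr (htrans hda haz.1)
  by_cases hbd : r b d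
  · exact Or.inl (htrans hzb.1 hbd)
  exact absurd ⟨(hD.1 d hd b hb).resolve_right hbd, hbd⟩
    (h d hd ⟨(hD.1 a ha d hd).resolve_right hda, hda⟩)

theorem IsMaxPrefDomain.nonempty_homeomorph_unitInterval [TopologicalSpace X] [CompactSpace X]
    [MetrizableSpace X] (hrefl : Reflexive r) (htrans : Transitive r) (hanti : AntiSymmetric r)
    (hcont : ContinuousPref r) (hgap : Gapless r) (hD : IsMaxPrefDomain r D) (hD' : D.Nontrivial) :
    Nonempty (D ≃ₜ unitInterval) := by
  let := hD.1.linearOrder hrefl htrans hanti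
  have : CompactSpace D := isCompact_iff_compactSpace.1 (hD.isClosed hrefl hcont).isCompact
  have hIoi (a : D) : Ioi a = Subtype.val ⁻¹' {y | r y a}ᶜ :=
    ext fun b => show a < b ↔ ¬ b ≤ a from not_le.symm
  have hIio (a : D) : Iio a = Subtype.val ⁻¹' {y | r a y}ᶜ :=
    ext fun b => show b < a ↔ ¬ a ≤ b from not_le.symm
  have : OrderTopology D := .of_compactSpace
    (fun a => hIoi a ▸ (hcont a).1.isOpen_compl.preimage continuous_subtype_val)
    (fun a => hIio a ▸ (hcont a).2.isOpen_compl.preimage continuous_subtype_val)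
  have : DenselyOrdered D := ⟨fun a b hab =>
    let ⟨c, hc, hac, hcb⟩ := hD.exists_between hrefl htrans hgap a.2 b.2 hab
    ⟨⟨c, hc⟩, hac, hcb⟩⟩
  have : Nontrivial D := hD'.coe_sort
  exact (nonempty_orderIso_unitInterval D).map OrderIso.toHomeomorph

end Preference

theorem maxDomain_arc_connected [TopologicalSpace X] [CompactSpace X]
    [TopologicalSpace.MetrizableSpace X]
    (r : X → X → Prop)
    (hrefl : Reflexive r) (htrans : Transitive r) (hanti : AntiSymmetric r)
    (hcont : ContinuousPref r) (hgap : Gapless r)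
    (D : Set X) (hD : IsMaxPrefDomain r D) :
    ∀ x ∈ D, ∀ y ∈ D, x ≠ y →
      ∃ f : unitInterval → X, Continuous f ∧ Function.Injective f ∧
        Set.range f ⊆ D ∧ f 0 = x ∧ f 1 = y := by
  intro x hx y hy hxy
  obtain ⟨e⟩ := hD.nonempty_homeomorph_unitInterval hrefl htrans hanti hcont hgap ⟨x, hx, y, hy, hxy⟩
  set x' : D := ⟨x, hx⟩
  set y' : D := ⟨y, hy⟩
  have hne : e x' ≠ e y' := e.injective.ne (Subtype.coe_ne_coe.1 hxy)
  refine ⟨fun t => e.symm (Icc.convexComb (e x') (e y') t), ?_,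
    Subtype.val_injective.comp (e.symm.injective.comp (Icc.convexComb_injective hne)),
    range_subset_iff.2 fun t => Subtype.coe_prop _, by simp [x'], by simp [y']⟩
  fun_prop
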